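/- For all x ≥ 0 and α ≥ 1/√6, log Γ(α + x) ≤ x·log(x) − x + ((2α−1)/2)·log(α + x) + (1/2)·log(2π), with the convention 0·log 0 = 0. -/

import Mathlib

/-!
Binet's function `μ(s) = log Γ(s) - (s - 1/2) log s + s - log(2π)/2` satisfies
`μ(s) - μ(s + 1) ≤ 1/(12 s) - 1/(12 (s + 1))` (Robbins' estimate, from the series of
`log (1 + 1/s)`), so `μ(s) - 1/(12 s)` increases along `s, s + 1, s + 2, …`. Log-convexity of `Γ`
together with Stirling's formula for factorials gives `μ(s + n) → 0`, hence `μ(s) ≤ 1/(12 s)`.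
For `s = α + x` the inequality `log r ≤ (r - r⁻¹)/2` at `r = (α + x)/x` gives
`x log(α + x) - x log x ≤ α - α²/(2(α + x))`, and `α² ≥ 1/6` lets the term `α²/(2(α + x))`
absorb `1/(12(α + x))`.
-/

open Real Filter Topology Stirling

namespace Real

theorem log_le_sub_inv_div_two {x : ℝ} (hx : 1 ≤ x) : log x ≤ (x - x⁻¹) / 2 := by
  rw [← sinh_log (by linarith)]
  exact self_le_sinh_iff.mpr (log_nonneg hx)

theorem mul_log_add_sub_log_le {a x : ℝ} (ha : 0 < a) (hx : 0 ≤ x) :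
    x * (log (a + x) - log x) ≤ a - a ^ 2 / (2 * (a + x)) := by
  rcases hx.eq_or_lt with rfl | hx
  · rw [zero_mul, add_zero, sq, mul_div_mul_comm, div_self ha.ne']
    linarith
  have h := log_le_sub_inv_div_two (x := (a + x) / x) (by rw [le_div_iff₀ hx]; linarith)
  rw [log_div (by positivity) hx.ne'] at h
  calc x * (log (a + x) - log x) ≤ x * (((a + x) / x - ((a + x) / x)⁻¹) / 2) := by gcongr
    _ = a - a ^ 2 / (2 * (a + x)) := by field_simp; ring

theorem log_Gamma_add_le {t θ : ℝ} (ht : 0 < t) (hθ₀ : 0 ≤ θ) (hθ₁ : θ ≤ 1) :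
    log (Gamma (t + θ)) ≤ log (Gamma t) + θ * log t := by
  have h := convexOn_log_Gamma.2 (Set.mem_Ioi.2 ht) (Set.mem_Ioi.2 (by linarith : 0 < t + 1))
    (by linarith : 0 ≤ 1 - θ) hθ₀ (by ring)
  simp only [Function.comp_apply, smul_eq_mul, Gamma_add_one ht.ne',
    log_mul ht.ne' (Gamma_pos_of_pos ht).ne'] at h
  rw [show (1 - θ) * t + θ * (t + 1) = t + θ by ring] at h
  linarith

/-- With `y = 1/(2s + 1)`, the left side is `∑ₖ y^(2k)/(2k + 1)`; bound every term after the
first by `y^(2k)/3`. -/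
theorem add_half_mul_log_one_add_inv_le {s : ℝ} (hs : 0 < s) :
    (s + 1 / 2) * log (1 + s⁻¹) ≤ 1 + 1 / (12 * s * (s + 1)) := by
  have hsum := (hasSum_log_one_add_inv hs).mul_left (s + 1 / 2)
  rw [← hasSum_nat_add_iff' 1] at hsum
  set y := 1 / (2 * s + 1) with hy
  have hy1 : (2 * s + 1) * y = 1 := by rw [hy]; field_simp
  have hy2 : y ^ 2 < 1 := by
    rw [hy, div_pow, div_lt_one (by positivity)]; nlinarith
  have hgeom : HasSum (fun k : ℕ => (y ^ 2) ^ (k + 1) / 3) (1 / (12 * s * (s + 1))) := by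
    have := ((hasSum_geometric_of_lt_one (sq_nonneg y) hy2).mul_left (y ^ 2)).div_const 3
    simp only [← pow_succ'] at this
    rwa [show y ^ 2 * (1 - y ^ 2)⁻¹ / 3 = 1 / (12 * s * (s + 1)) by
      rw [hy, div_pow, one_pow, one_sub_div (by positivity),
        show (2 * s + 1) ^ 2 - 1 = 4 * s * (s + 1) by ring]
      field_simp; ring] at this
  clear_value y
  have hterm (k : ℕ) : (s + 1 / 2) * (2 * (1 / (2 * ((k + 1 : ℕ) : ℝ) + 1)) * y ^ (2 * (k + 1) + 1))
      ≤ (y ^ 2) ^ (k + 1) / 3 := by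
    calc (s + 1 / 2) * (2 * (1 / (2 * ((k + 1 : ℕ) : ℝ) + 1)) * y ^ (2 * (k + 1) + 1))
        = ((2 * s + 1) * y) * (y ^ 2) ^ (k + 1) / (2 * k + 3) := by push_cast; ring
      _ ≤ (y ^ 2) ^ (k + 1) / 3 := by
        rw [hy1, one_mul]
        gcongr
        linarith [(Nat.cast_nonneg k : (0 : ℝ) ≤ k)]
  have := hasSum_le hterm hsum hgeom
  rw [Finset.sum_range_one] at this
  linarith [show (s + 1 / 2) * (2 * (1 / (2 * ((0 : ℕ) : ℝ) + 1)) * y ^ (2 * 0 + 1)) = 1 by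
    push_cast; linear_combination hy1]

end Real

noncomputable def binetMu (s : ℝ) : ℝ := log (Gamma s) - (s - 1 / 2) * log s + s - log (2 * π) / 2

theorem binetMu_sub_binetMu_add_one {s : ℝ} (hs : 0 < s) :
    binetMu s - binetMu (s + 1) = (s + 1 / 2) * log (1 + s⁻¹) - 1 := by
  rw [show 1 + s⁻¹ = (s + 1) / s by field_simp, log_div (by positivity) hs.ne', binetMu, binetMu,
    Gamma_add_one hs.ne', log_mul hs.ne' (Gamma_pos_of_pos hs).ne']
  ring

theorem binetMu_sub_binetMu_add_one_le {s : ℝ} (hs : 0 < s) :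
    binetMu s - binetMu (s + 1) ≤ 1 / (12 * s) - 1 / (12 * (s + 1)) := by
  rw [binetMu_sub_binetMu_add_one hs,
    show 1 / (12 * s) - 1 / (12 * (s + 1)) = 1 / (12 * s * (s + 1)) by field_simp; ring]
  linarith [add_half_mul_log_one_add_inv_le hs]

theorem binetMu_add_le {t θ : ℝ} (ht : 1 / 2 ≤ t) (hθ₀ : 0 ≤ θ) (hθ₁ : θ ≤ 1) :
    binetMu (t + θ) ≤ binetMu t + θ / (2 * (t + θ)) := by
  have ht₀ : 0 < t := by linarith
  have hlog : θ / (t + θ) ≤ log (t + θ) - log t := by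
    have := one_sub_inv_le_log_of_pos (x := (t + θ) / t) (by positivity)
    rwa [log_div (by positivity) ht₀.ne', inv_div, one_sub_div (by positivity), add_sub_cancel_left]
      at this
  have hmul := mul_le_mul_of_nonneg_left hlog (by linarith : 0 ≤ t + θ - 1 / 2)
  have hΓ := log_Gamma_add_le ht₀ hθ₀ hθ₁
  have hrem : θ - (t + θ - 1 / 2) * (θ / (t + θ)) = θ / (2 * (t + θ)) := by
    field_simp; ring
  rw [binetMu, binetMu, ← hrem]
  linarith

theorem binetMu_natCast_add_one (k : ℕ) :
    binetMu (k + 1) = log (stirlingSeq (k + 1)) - log π / 2 := by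
  have hk : (0 : ℝ) < k + 1 := by positivity
  rw [binetMu, log_stirlingSeq_formula, Nat.factorial_succ, Gamma_nat_eq_factorial]
  push_cast
  rw [log_mul hk.ne' (by positivity), log_mul two_ne_zero hk.ne', log_mul two_ne_zero pi_ne_zero,
    log_div hk.ne' (exp_pos 1).ne', log_exp]
  ring

theorem tendsto_binetMu_natCast_add_one :
    Tendsto (fun k : ℕ => binetMu (k + 1)) atTop (𝓝 0) := by
  simp_rw [binetMu_natCast_add_one]
  have h := (tendsto_stirlingSeq_sqrt_pi.comp (tendsto_add_atTop_nat 1)).log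
    (sqrt_pos.2 pi_pos).ne'
  rw [log_sqrt pi_pos.le] at h
  simpa using h.sub_const (log π / 2)

theorem binetMu_sub_le_binetMu_add_natCast {s : ℝ} (hs : 0 < s) (n : ℕ) :
    binetMu s - 1 / (12 * s) ≤ binetMu (s + n) - 1 / (12 * (s + n)) := by
  have hmono : Monotone fun n : ℕ => binetMu (s + n) - 1 / (12 * (s + n)) := by
    refine monotone_nat_of_le_succ fun j => ?_
    have := binetMu_sub_binetMu_add_one_le (by positivity : 0 < s + j)
    push_cast
    rw [← add_assoc]
    linarith
  simpa using hmono n.zero_le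

theorem binetMu_add_natCast_le {s : ℝ} (hs : 0 ≤ s) (k : ℕ) :
    binetMu (s + (k + 1)) ≤ binetMu ((⌊s⌋₊ + k : ℕ) + 1) + 1 / (2 * (s + (k + 1))) := by
  set m := ⌊s⌋₊
  have hθ₀ : 0 ≤ s - m := sub_nonneg.2 (Nat.floor_le hs)
  have hθ₁ : s - m ≤ 1 := by linarith [Nat.lt_floor_add_one s]
  have h := binetMu_add_le (t := (m + k : ℕ) + 1)
    (by linarith [Nat.cast_nonneg (α := ℝ) (m + k)]) hθ₀ hθ₁
  rw [show ((m + k : ℕ) : ℝ) + 1 + (s - m) = s + (k + 1) by push_cast; ring] at h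
  have : (s - m) / (2 * (s + (k + 1))) ≤ 1 / (2 * (s + (k + 1))) := by gcongr
  linarith

theorem binetMu_le {s : ℝ} (hs : 0 < s) : binetMu s ≤ 1 / (12 * s) := by
  have hbound (k : ℕ) :
      binetMu s - 1 / (12 * s) ≤ binetMu ((⌊s⌋₊ + k : ℕ) + 1) + 1 / (2 * (s + (k + 1))) := by
    have h := binetMu_sub_le_binetMu_add_natCast hs (k + 1)
    have : 0 ≤ 1 / (12 * (s + (k + 1))) := by positivity
    push_cast at h
    linarith [binetMu_add_natCast_le hs.le k]
  have hlim : Tendsto (fun k : ℕ => binetMu ((⌊s⌋₊ + k : ℕ) + 1) + 1 / (2 * (s + (k + 1))))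
      atTop (𝓝 (0 + 0)) := by
    refine (tendsto_binetMu_natCast_add_one.comp (tendsto_add_atTop_nat ⌊s⌋₊) |>.congr ?_).add ?_
    · intro k; simp [add_comm]
    · have h : Tendsto (fun k : ℕ => 2 * (s + ((k : ℝ) + 1))) atTop atTop :=
        (tendsto_atTop_add_const_left _ s
          (tendsto_atTop_add_const_right _ 1 tendsto_natCast_atTop_atTop)).const_mul_atTop two_pos
      simpa only [one_div, Function.comp_def] using tendsto_inv_atTop_zero.comp h
  linarith [ge_of_tendsto' hlim hbound]

theorem log_Gamma_le_stirling {s : ℝ} (hs : 0 < s) :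
    log (Gamma s) ≤ (s - 1 / 2) * log s - s + log (2 * π) / 2 + 1 / (12 * s) := by
  have := binetMu_le hs
  rw [binetMu] at this
  linarith

theorem stmt_2 (x α : ℝ) (hx : 0 ≤ x) (hα : 1 / Real.sqrt 6 ≤ α) :
    Real.log (Real.Gamma (α + x)) ≤
      x * Real.log x - x + ((2 * α - 1) / 2) * Real.log (α + x) + (1/2) * Real.log (2 * π) := by
  have hα₀ : 0 < α := lt_of_lt_of_le (by positivity) hα
  have hα₂ : 1 / 6 ≤ α ^ 2 := by
    calc (1 : ℝ) / 6 = (1 / √6) ^ 2 := by rw [div_pow, one_pow, sq_sqrt (by norm_num)]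
      _ ≤ α ^ 2 := by gcongr
  have hΓ := log_Gamma_le_stirling (by positivity : 0 < α + x)
  have hlog := mul_log_add_sub_log_le hα₀ hx
  have hrem : 1 / (12 * (α + x)) ≤ α ^ 2 / (2 * (α + x)) := by
    rw [div_le_div_iff₀ (by positivity) (by positivity)]
    nlinarith
  linarith
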